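/- Every infinite residually finite group has infinitely many conjugacy classes. -/
import Mathlib


theorem stmt5 {Γ : Type*} [Group Γ] [Infinite Γ]
    (hrf : ∀ g : Γ, g ≠ 1 → ∃ H : Subgroup Γ, H.Normal ∧ H.FiniteIndex ∧ g ∉ H) :
    Infinite (ConjClasses Γ) := by
  classical
  by_contra hinf
  have hfin : Finite (ConjClasses Γ) := not_infinite_iff_finite.mp hinf
  -- choose subgroups
  set H : Γ → Subgroup Γ := fun g =>
    if h : g = 1 then ⊤ else (hrf g h).choose with hHdef
  have hHnorm : ∀ g, (H g).Normal := by
    intro g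
    by_cases h : g = 1
    · simp [hHdef, h]
    · simp [hHdef, h]; exact (hrf g h).choose_spec.1
  have hHfi : ∀ g, (H g).FiniteIndex := by
    intro g
    by_cases h : g = 1
    · simp [hHdef, h]; infer_instance
    · simp [hHdef, h]; exact (hrf g h).choose_spec.2.1
  have hHnot : ∀ g (h : g ≠ 1), g ∉ H g := by
    intro g h
    simp [hHdef, h]
    exact (hrf g h).choose_spec.2.2
  set N : Subgroup Γ := ⨅ c : ConjClasses Γ, H c.out with hNdef
  have hNfi : N.FiniteIndex := Subgroup.finiteIndex_iInf fun c => hHfi c.out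
  have hNbot : N = ⊥ := by
    rw [eq_bot_iff]
    intro x hx
    simp only [Subgroup.mem_bot]
    by_contra hx1
    set c := ConjClasses.mk x with hc
    have hout : IsConj c.out x := by
      have := Quotient.out_eq c
      have : ConjClasses.mk c.out = ConjClasses.mk x := this
      exact (ConjClasses.mk_eq_mk_iff_isConj).mp this
    have hout1 : c.out ≠ 1 := by
      intro h1
      rw [h1] at hout
      exact hx1 (isConj_one_left.mp hout.symm)
    have hxH : x ∈ H c.out := by
      have := Subgroup.mem_iInf.mp hx c
      exact this
    obtain ⟨u, hu⟩ := hout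
    have : (u : Γ) * c.out * (u : Γ)⁻¹ = x := by
      rw [mul_inv_eq_iff_eq_mul]; exact hu.eq
    have hmem : c.out ∈ H c.out := by
      have h2 := (hHnorm c.out).conj_mem x hxH (u : Γ)⁻¹
      rw [← this] at h2
      simpa [mul_assoc] using h2
    exact hHnot c.out hout1 hmem
  have : (⊥ : Subgroup Γ).FiniteIndex := hNbot ▸ hNfi
  have hidx : (⊥ : Subgroup Γ).index = Nat.card Γ := Subgroup.index_bot
  have : Nat.card Γ ≠ 0 := hidx ▸ this.index_ne_zero
  exact this Nat.card_eq_zero_of_infinite
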